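/- arXiv:1601.00839 — 5 statements merged into one kernel-verified Lean document; each statement's English description precedes it below -/
import Mathlib

section
/- Let G = (V,E) be a finite connected undirected graph with positive edge weights, let Q be a shortest path in G, let u ∈ V with u not on Q, and let ε', ε'' > 0 be real numbers. Let H be a finite connected undirected graph with positive edge weights such that u ∈ V(H) ⊆ V and such that for all v₁, v₂ ∈ V(H), d_H(v₁,v₂) ≥ d_G(v₁,v₂). Assume that for every vertex v on Q there is a vertex v' ∈ V(H) on Q such that d_H(u,v') + d_Q(v',v) ≤ (1+ε')·d_G(u,v). Then there exists a subset P of V(H) ∩ V(Q) with |P| ≤ 4/ε'' + 4 such that for every vertex v on Q there is a p ∈ P with d_H(u,p) + d_Q(p,v) ≤ (1+ε')·(1+ε'')·d_G(u,v). -/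
open SimpleGraph
open scoped Classical

/-- The weight of a walk in an edge-weighted graph: the sum of the weights of its edges. -/
noncomputable def walkWeight {V : Type*} (w : V → V → ℝ) {G : SimpleGraph V} {x y : V}
    (p : G.Walk x y) : ℝ :=
  (p.darts.map (fun d => w d.toProd.1 d.toProd.2)).sum

/-- The (shortest-path) distance between two vertices of an edge-weighted graph:
the infimum of the weights of walks between them. -/
noncomputable def gdist {V : Type*} (G : SimpleGraph V) (w : V → V → ℝ) (x y : V) : ℝ :=
  sInf {c : ℝ | ∃ p : G.Walk x y, walkWeight w p = c}

/-- The distance along a path `Q` between two of its vertices `x` and `y`,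
i.e. the weight of the subpath of `Q` between `x` and `y`, computed as the
difference of the weights of the prefixes of `Q` ending at `x` and at `y`
(junk value `0` if `x` or `y` is not on `Q`). -/
noncomputable def pathDist {V : Type*} (w : V → V → ℝ) {G : SimpleGraph V} {a b : V}
    (Q : G.Walk a b) (x y : V) : ℝ :=
  if hx : x ∈ Q.support then
    if hy : y ∈ Q.support then
      |walkWeight w (Q.takeUntil x hx) - walkWeight w (Q.takeUntil y hy)|
    else 0
  else 0

/-- `Q` is a shortest path: it is a path and for all vertices `x, y` on `Q`, the weight of
the subpath of `Q` between `x` and `y` equals the distance between `x` and `y` in `G`. -/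
def IsShortestPath {V : Type*} (G : SimpleGraph V) (w : V → V → ℝ) {a b : V}
    (Q : G.Walk a b) : Prop :=
  Q.IsPath ∧ ∀ x ∈ Q.support, ∀ y ∈ Q.support, pathDist w Q x y = gdist G w x y

section Aux
variable {V : Type*} {G : SimpleGraph V} (w : V → V → ℝ)

lemma walkWeight_nonneg (hpos : ∀ x y, G.Adj x y → 0 < w x y) {x y : V} (p : G.Walk x y) :
    0 ≤ walkWeight w p := by
  apply List.sum_nonneg
  intro c hc
  rcases List.mem_map.1 hc with ⟨d, _, rfl⟩
  exact (hpos _ _ d.adj).le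

lemma walkWeight_append {x y z : V} (p : G.Walk x y) (q : G.Walk y z) :
    walkWeight w (p.append q) = walkWeight w p + walkWeight w q := by
  simp [walkWeight, SimpleGraph.Walk.darts_append]

lemma walkWeight_reverse (hsymm : ∀ x y, w x y = w y x) {x y : V} (p : G.Walk x y) :
    walkWeight w p.reverse = walkWeight w p := by
  unfold walkWeight
  rw [SimpleGraph.Walk.darts_reverse, List.map_reverse, List.sum_reverse, List.map_map]
  have : ((fun d : G.Dart => w d.toProd.1 d.toProd.2) ∘ Dart.symm)
      = fun d : G.Dart => w d.toProd.1 d.toProd.2 := by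
    funext d
    simp [SimpleGraph.Dart.symm, hsymm d.toProd.2 d.toProd.1]
  rw [this]

lemma gdist_set_nonempty (hconn : G.Connected) (x y : V) :
    {c : ℝ | ∃ p : G.Walk x y, walkWeight w p = c}.Nonempty := by
  obtain ⟨p⟩ := hconn.preconnected x y
  exact ⟨_, p, rfl⟩

lemma gdist_nonneg (hpos : ∀ x y, G.Adj x y → 0 < w x y) (x y : V) : 0 ≤ gdist G w x y :=
  Real.sInf_nonneg (by rintro c ⟨p, rfl⟩; exact walkWeight_nonneg w hpos p)

lemma gdist_le_walkWeight (hpos : ∀ x y, G.Adj x y → 0 < w x y) {x y : V} (p : G.Walk x y) :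
    gdist G w x y ≤ walkWeight w p :=
  csInf_le ⟨0, by rintro c ⟨q, rfl⟩; exact walkWeight_nonneg w hpos q⟩ ⟨p, rfl⟩

lemma gdist_triangle (hpos : ∀ x y, G.Adj x y → 0 < w x y) (hconn : G.Connected) (x y z : V) :
    gdist G w x z ≤ gdist G w x y + gdist G w y z := by
  apply le_of_forall_pos_le_add
  intro ε hε
  obtain ⟨c1, ⟨p, rfl⟩, hc1⟩ := Real.lt_sInf_add_pos (gdist_set_nonempty w hconn x y) (half_pos hε)
  obtain ⟨c2, ⟨q, rfl⟩, hc2⟩ := Real.lt_sInf_add_pos (gdist_set_nonempty w hconn y z) (half_pos hε)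
  have h := gdist_le_walkWeight w hpos (p.append q)
  rw [walkWeight_append] at h
  unfold gdist at *
  linarith

lemma gdist_symm (hsymm : ∀ x y, w x y = w y x) (x y : V) : gdist G w x y = gdist G w y x := by
  unfold gdist
  congr 1
  ext c
  constructor
  · rintro ⟨p, rfl⟩; exact ⟨p.reverse, walkWeight_reverse w hsymm p⟩
  · rintro ⟨p, rfl⟩; exact ⟨p.reverse, walkWeight_reverse w hsymm p⟩

lemma abs_sub_le_of_floor_div_eq {a b c : ℝ} (ha : 0 ≤ a) (hb : 0 ≤ b) (hc : 0 < c)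
    (h : ⌊a/c⌋₊ = ⌊b/c⌋₊) : |a - b| ≤ c := by
  have key : ∀ x y : ℝ, 0 ≤ y → ⌊x/c⌋₊ = ⌊y/c⌋₊ → x - y ≤ c := by
    intro x y hy hxy
    have h1 : x/c < (⌊y/c⌋₊ : ℝ) + 1 := by rw [← hxy]; exact Nat.lt_floor_add_one _
    have h2 : (⌊y/c⌋₊ : ℝ) ≤ y/c := Nat.floor_le (div_nonneg hy hc.le)
    have h3 : (x - y)/c < 1 := by rw [sub_div]; linarith
    linarith [(div_lt_one hc).1 h3]
  rw [abs_sub_le_iff]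
  exact ⟨key a b hb h, key b a ha h.symm⟩

end Aux

/-- The portal lemma (Lemma 2 of the paper). `G` is a finite connected positively
edge-weighted graph, `Q` a shortest path in `G`, `u` a vertex not on `Q`, and `H` a finite
connected positively edge-weighted graph on a vertex set `S ⊆ V` containing `u` whose
distances dominate those of `G`. If every vertex of `Q` is `(1+ε')`-approximately reached
from `u` via a vertex of `H` on `Q` followed by a subpath of `Q`, then there is a set `P`
of at most `4/ε'' + 4` portals among the vertices of `H` on `Q` such that every vertex `v`
of `Q` is `(1+ε')(1+ε'')`-approximately reached from `u` through a portal `p ∈ P` followed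
by the subpath of `Q` from `p` to `v`. -/



theorem portal_lemma {V : Type*} [Fintype V] (G : SimpleGraph V) (w : V → V → ℝ)
    (hGsymm : ∀ x y, w x y = w y x) (hGpos : ∀ x y, G.Adj x y → 0 < w x y)
    (hGconn : G.Connected) {a b : V} (Q : G.Walk a b) (hQ : IsShortestPath G w Q)
    (S : Set V) (H : SimpleGraph ↥S) (wH : ↥S → ↥S → ℝ)
    (hHsymm : ∀ x y, wH x y = wH y x) (hHpos : ∀ x y, H.Adj x y → 0 < wH x y)
    (hHconn : H.Connected)
    (u : ↥S) (hu : (u : V) ∉ Q.support)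
    (ε' ε'' : ℝ) (hε' : 0 < ε') (hε'' : 0 < ε'')
    (hdom : ∀ v₁ v₂ : ↥S, gdist G w ↑v₁ ↑v₂ ≤ gdist H wH v₁ v₂)
    (happrox : ∀ v ∈ Q.support, ∃ v' : ↥S, (↑v' : V) ∈ Q.support ∧
      gdist H wH u v' + pathDist w Q ↑v' v ≤ (1 + ε') * gdist G w ↑u v) :
    ∃ P : Finset ↥S, (∀ p ∈ P, (↑p : V) ∈ Q.support) ∧ (P.card : ℝ) ≤ 4 / ε'' + 4 ∧
      ∀ v ∈ Q.support, ∃ p ∈ P,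
        gdist H wH u p + pathDist w Q ↑p v ≤ (1 + ε') * (1 + ε'') * gdist G w ↑u v := by
  classical
  -- the prefix-weight coordinate along Q
  set T : V → ℝ := fun x =>
    if hx : x ∈ Q.support then walkWeight w (Q.takeUntil x hx) else 0 with hT
  have hpd : ∀ x, x ∈ Q.support → ∀ y, y ∈ Q.support →
      pathDist w Q x y = |T x - T y| := by
    intro x hx y hy
    simp only [hT, pathDist, dif_pos hx, dif_pos hy]
  have hgd : ∀ x, x ∈ Q.support → ∀ y, y ∈ Q.support →
      gdist G w x y = |T x - T y| := by
    intro x hx y hy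
    rw [← hQ.2 x hx y hy, hpd x hx y hy]
  -- the vertex of Q minimizing the distance from u
  obtain ⟨vs, hvsF, hmin⟩ := Finset.exists_min_image Q.support.toFinset
    (fun x => gdist G w ↑u x) ⟨a, List.mem_toFinset.2 Q.start_mem_support⟩
  have hvs : vs ∈ Q.support := List.mem_toFinset.1 hvsF
  have hd0 : ∀ x : V, 0 ≤ gdist G w ↑u x := fun x => gdist_nonneg w hGpos _ _
  have hds0 : 0 ≤ gdist G w ↑u vs := hd0 vs
  -- Lipschitz and cone properties of v ↦ gdist u v along Q
  have hLip : ∀ x ∈ Q.support, gdist G w ↑u x ≤ gdist G w ↑u vs + |T vs - T x| := by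
    intro x hx
    have h1 := gdist_triangle w hGpos hGconn (↑u) vs x
    rw [hgd vs hvs x hx] at h1
    exact h1
  have hCone : ∀ x ∈ Q.support, |T vs - T x| ≤ gdist G w ↑u x + gdist G w ↑u vs := by
    intro x hx
    have h1 := gdist_triangle w hGpos hGconn vs (↑u) x
    rw [hgd vs hvs x hx, gdist_symm w hGsymm vs ↑u] at h1
    linarith
  -- the key 1-dimensional coordinate
  set g : V → ℝ := fun x =>
    if T vs ≤ T x then T x - gdist G w ↑u x else T x + gdist G w ↑u x with hg
  have hgmem : ∀ x ∈ Q.support,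
      T vs - gdist G w ↑u vs ≤ g x ∧ g x ≤ T vs + gdist G w ↑u vs := by
    intro x hx
    have l := hLip x hx
    have c := hCone x hx
    simp only [hg]
    by_cases hs : T vs ≤ T x
    · rw [if_pos hs]
      have habs : |T vs - T x| = T x - T vs := by
        rw [abs_sub_comm, abs_of_nonneg (by linarith)]
      rw [habs] at l c
      constructor <;> linarith
    · push_neg at hs
      rw [if_neg (not_le.2 hs)]
      have habs : |T vs - T x| = T vs - T x := abs_of_nonneg (by linarith)
      rw [habs] at l c
      constructor <;> linarith
  -- the classification of vertices of Q
  set idx : V → ℕ := fun x =>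
    ⌊(g x - (T vs - gdist G w ↑u vs)) / (ε'' * gdist G w ↑u vs)⌋₊ with hidx
  set f : V → Bool × ℕ := fun x => (decide (T vs ≤ T x), idx x) with hf
  set K : Finset (Bool × ℕ) := Q.support.toFinset.image f with hK
  -- index bound
  have hidxle : ∀ x ∈ Q.support, idx x ≤ ⌊2/ε''⌋₊ := by
    intro x hx
    have hm := hgmem x hx
    simp only [hidx]
    rcases eq_or_lt_of_le hds0 with h0 | h0
    · have e0 : g x - (T vs - gdist G w ↑u vs) = 0 := by linarith [hm.1, hm.2]
      rw [e0, zero_div, Nat.floor_zero]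
      exact Nat.zero_le _
    · have hle : (g x - (T vs - gdist G w ↑u vs)) / (ε'' * gdist G w ↑u vs) ≤ 2/ε'' := by
        rw [div_le_div_iff₀ (by positivity) hε'']
        nlinarith [hm.2]
      exact Nat.floor_mono hle
  -- representatives: the d-minimizers of each class
  have hrepex : ∀ k ∈ K, ∃ z ∈ Q.support.toFinset.filter (fun x => f x = k),
      ∀ y ∈ Q.support.toFinset.filter (fun x => f x = k),
        gdist G w ↑u z ≤ gdist G w ↑u y := by
    intro k hk
    apply Finset.exists_min_image
    obtain ⟨x, hx, hfx⟩ := Finset.mem_image.1 hk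
    exact ⟨x, Finset.mem_filter.2 ⟨hx, hfx⟩⟩
  choose rep hrep1 hrep2 using hrepex
  have hrepsupp : ∀ k (hk : k ∈ K), rep k hk ∈ Q.support := by
    intro k hk
    exact List.mem_toFinset.1 (Finset.mem_filter.1 (hrep1 k hk)).1
  -- the candidate portals
  choose cand hcand1 hcand2 using happrox
  refine ⟨K.attach.image (fun k => cand (rep k.1 k.2) (hrepsupp k.1 k.2)), ?_, ?_, ?_⟩
  · intro p hp
    obtain ⟨k, _, rfl⟩ := Finset.mem_image.1 hp
    exact hcand1 _ _
  · -- cardinality bound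
    have h1 : (K.attach.image (fun k => cand (rep k.1 k.2) (hrepsupp k.1 k.2))).card
        ≤ K.card := le_trans Finset.card_image_le (le_of_eq (Finset.card_attach))
    have h2 : K.card ≤ 2 * (⌊2/ε''⌋₊ + 1) := by
      have hsub : K ⊆ (Finset.univ : Finset Bool) ×ˢ Finset.range (⌊2/ε''⌋₊ + 1) := by
        intro k hk
        obtain ⟨x, hx, rfl⟩ := Finset.mem_image.1 hk
        have hx' := List.mem_toFinset.1 hx
        simp only [Finset.mem_product, Finset.mem_univ, Finset.mem_range, true_and]
        exact Nat.lt_succ_of_le (hidxle x hx')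
      calc K.card ≤ _ := Finset.card_le_card hsub
        _ = 2 * (⌊2/ε''⌋₊ + 1) := by
          simp [Finset.card_product]
    have h3 : (⌊2/ε''⌋₊ : ℝ) ≤ 2/ε'' := Nat.floor_le (by positivity)
    have h4 := h1.trans h2
    calc ((K.attach.image (fun k => cand (rep k.1 k.2) (hrepsupp k.1 k.2))).card : ℝ)
        ≤ ((2 * (⌊2/ε''⌋₊ + 1) : ℕ) : ℝ) := by exact_mod_cast h4
      _ = 2 * (⌊2/ε''⌋₊ : ℝ) + 2 := by push_cast; ring
      _ ≤ 2 * (2/ε'') + 2 := by linarith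
      _ ≤ 4/ε'' + 4 := by
          rw [show (2:ℝ) * (2/ε'') = 4/ε'' by ring]
          linarith
  · -- coverage
    intro v hv
    have hvF : v ∈ Q.support.toFinset := List.mem_toFinset.2 hv
    have hkK : f v ∈ K := Finset.mem_image_of_mem f hvF
    refine ⟨cand (rep (f v) hkK) (hrepsupp (f v) hkK),
      Finset.mem_image.2 ⟨⟨f v, hkK⟩, Finset.mem_attach _ _, rfl⟩, ?_⟩
    have hzsupp : rep (f v) hkK ∈ Q.support := hrepsupp (f v) hkK
    have hfz : f (rep (f v) hkK) = f v := (Finset.mem_filter.1 (hrep1 (f v) hkK)).2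
    have hdzv : gdist G w ↑u (rep (f v) hkK) ≤ gdist G w ↑u v :=
      hrep2 (f v) hkK v (Finset.mem_filter.2 ⟨hvF, rfl⟩)
    have hp_supp : (↑(cand (rep (f v) hkK) (hrepsupp (f v) hkK)) : V) ∈ Q.support :=
      hcand1 _ _
    have hc2 := hcand2 (rep (f v) hkK) (hrepsupp (f v) hkK)
    -- triangle inequality along Q
    have htr : pathDist w Q (↑(cand (rep (f v) hkK) (hrepsupp (f v) hkK))) v ≤
        pathDist w Q (↑(cand (rep (f v) hkK) (hrepsupp (f v) hkK))) (rep (f v) hkK)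
          + |T (rep (f v) hkK) - T v| := by
      rw [hpd _ hp_supp _ hv, hpd _ hp_supp _ hzsupp]
      exact abs_sub_le _ _ _
    -- same side and same index
    have hside : (T vs ≤ T (rep (f v) hkK)) ↔ (T vs ≤ T v) := by
      have h := congrArg Prod.fst hfz
      simp only [hf] at h
      exact decide_eq_decide.1 h
    have hidxeq : idx (rep (f v) hkK) = idx v := by
      have h := congrArg Prod.snd hfz
      simp only [hf] at h
      exact h
    have hgz := hgmem (rep (f v) hkK) hzsupp
    have hgv := hgmem v hv
    have hdsv : gdist G w ↑u vs ≤ gdist G w ↑u v := hmin v hvF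
    -- the g-coordinates are close
    have hgbound : |g (rep (f v) hkK) - g v| ≤ ε'' * gdist G w ↑u v := by
      rcases eq_or_lt_of_le hds0 with h0 | h0
      · have e1 : g (rep (f v) hkK) - g v = 0 := by
          have := hgz.1; have := hgz.2; have := hgv.1; have := hgv.2
          linarith
        rw [e1, abs_zero]
        exact mul_nonneg hε''.le (hd0 v)
      · have key : |(g (rep (f v) hkK) - (T vs - gdist G w ↑u vs))
            - (g v - (T vs - gdist G w ↑u vs))| ≤ ε'' * gdist G w ↑u vs := by
          apply abs_sub_le_of_floor_div_eq
          · linarith [hgz.1]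
          · linarith [hgv.1]
          · exact mul_pos hε'' h0
          · simpa only [hidx] using hidxeq
        have e2 : (g (rep (f v) hkK) - (T vs - gdist G w ↑u vs))
            - (g v - (T vs - gdist G w ↑u vs)) = g (rep (f v) hkK) - g v := by ring
        rw [e2] at key
        calc |g (rep (f v) hkK) - g v| ≤ ε'' * gdist G w ↑u vs := key
          _ ≤ ε'' * gdist G w ↑u v := by nlinarith
    -- relate T-distance to g-distance
    have hTzv : |T (rep (f v) hkK) - T v| ≤ |g (rep (f v) hkK) - g v|
        + (gdist G w ↑u v - gdist G w ↑u (rep (f v) hkK)) := by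
      by_cases hsv : T vs ≤ T v
      · have hsz : T vs ≤ T (rep (f v) hkK) := hside.2 hsv
        have e1 : g (rep (f v) hkK) = T (rep (f v) hkK) - gdist G w ↑u (rep (f v) hkK) := by
          simp only [hg]; rw [if_pos hsz]
        have e2 : g v = T v - gdist G w ↑u v := by
          simp only [hg]; rw [if_pos hsv]
        have e3 : T (rep (f v) hkK) - T v = (g (rep (f v) hkK) - g v)
            + (gdist G w ↑u (rep (f v) hkK) - gdist G w ↑u v) := by
          rw [e1, e2]; ring
        rw [e3]
        calc |_ + _| ≤ |g (rep (f v) hkK) - g v|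
            + |gdist G w ↑u (rep (f v) hkK) - gdist G w ↑u v| := abs_add_le _ _
          _ ≤ _ := by
            have : |gdist G w ↑u (rep (f v) hkK) - gdist G w ↑u v|
                = gdist G w ↑u v - gdist G w ↑u (rep (f v) hkK) := by
              rw [abs_of_nonpos (by linarith)]; ring
            linarith
      · have hsz : ¬ (T vs ≤ T (rep (f v) hkK)) := fun h => hsv (hside.1 h)
        have e1 : g (rep (f v) hkK) = T (rep (f v) hkK) + gdist G w ↑u (rep (f v) hkK) := by
          simp only [hg]; rw [if_neg hsz]
        have e2 : g v = T v + gdist G w ↑u v := by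
          simp only [hg]; rw [if_neg hsv]
        have e3 : T (rep (f v) hkK) - T v = (g (rep (f v) hkK) - g v)
            + (gdist G w ↑u v - gdist G w ↑u (rep (f v) hkK)) := by
          rw [e1, e2]; ring
        rw [e3]
        calc |_ + _| ≤ |g (rep (f v) hkK) - g v|
            + |gdist G w ↑u v - gdist G w ↑u (rep (f v) hkK)| := abs_add_le _ _
          _ ≤ _ := by
            have : |gdist G w ↑u v - gdist G w ↑u (rep (f v) hkK)|
                = gdist G w ↑u v - gdist G w ↑u (rep (f v) hkK) :=
              abs_of_nonneg (by linarith)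
            linarith
    -- conclude
    have hfin : (1 + ε') * gdist G w ↑u (rep (f v) hkK) + |T (rep (f v) hkK) - T v|
        ≤ (1 + ε') * (1 + ε'') * gdist G w ↑u v := by
      have h6 : |T (rep (f v) hkK) - T v| ≤ ε'' * gdist G w ↑u v
          + (gdist G w ↑u v - gdist G w ↑u (rep (f v) hkK)) := by linarith
      nlinarith [hd0 v, hd0 (rep (f v) hkK), hε'.le, hε''.le,
        mul_le_mul_of_nonneg_left hdzv hε'.le,
        mul_nonneg (mul_nonneg hε'.le hε''.le) (hd0 v)]
    linarith
end

section
/- Let S be a finite nonempty set of real numbers, let ε > 0 be a real number, and let D : S → ℝ be a function such that D(x) > 0 for all x ∈ S and D(x) + D(y) ≥ |x − y| for all x, y ∈ S. Then there exists a subset P of S with |P| ≤ 4/ε + 4 such that for every x ∈ S there is a p ∈ P with D(p) + |x − p| ≤ (1+ε)·D(x). -/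
/-- The one-dimensional core of the portal-selection argument (proof of Lemma 2 of the
paper): `S` is a finite nonempty set of positions along a shortest path, `D x` is the
distance from the query vertex to position `x`, and the hypothesis
`|x - y| ≤ D x + D y` encodes that these distances dominate distances along the path.
Then there is a subset `P` of `S` of at most `4/ε + 4` portals such that every `x ∈ S`
is `(1+ε)`-approximately reached through some portal `p ∈ P`. -/
theorem portal_selection_real (S : Finset ℝ) (hS : S.Nonempty) (ε : ℝ) (hε : 0 < ε)
    (D : ℝ → ℝ) (hpos : ∀ x ∈ S, 0 < D x)
    (htri : ∀ x ∈ S, ∀ y ∈ S, |x - y| ≤ D x + D y) :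
    ∃ P ⊆ S, (P.card : ℝ) ≤ 4 / ε + 4 ∧
      ∀ x ∈ S, ∃ p ∈ P, D p + |x - p| ≤ (1 + ε) * D x := by
  classical
  set a : ℝ → ℝ := fun x => D x + x with ha
  set b : ℝ → ℝ := fun x => D x - x with hb
  obtain ⟨xa, hxa, hxamin⟩ := S.exists_min_image a hS
  obtain ⟨xb, hxb, hxbmin⟩ := S.exists_min_image b hS
  set A := a xa with hA
  set B := b xb with hB
  set δ := ε / 2 with hδdef
  have hδ : 0 < δ := by rw [hδdef]; positivity
  set σ : ℝ → ℝ := fun x => a x - A with hσdef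
  set θ : ℝ → ℝ := fun x => b x - B with hθdef
  set r : ℝ → ℝ := fun x => σ x + θ x with hrdef
  set g : ℝ → ℕ := fun x => ⌊θ x / (δ * r x)⌋₊ with hgdef
  have hae : ∀ x, a x = D x + x := fun _ => rfl
  have hbe : ∀ x, b x = D x - x := fun _ => rfl
  have hAe : A = a xa := rfl
  have hBe : B = b xb := rfl
  have hrσθ : ∀ x, r x = σ x + θ x := fun _ => rfl
  have hθb : ∀ x, θ x = b x - B := fun _ => rfl
  have hσa : ∀ x, σ x = a x - A := fun _ => rfl
  have hgeq : ∀ x, g x = ⌊θ x / (δ * r x)⌋₊ := fun _ => rfl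
  clear_value a b A B δ σ θ r g
  have hAB : 0 ≤ A + B := by
    have h := htri xa hxa xb hxb
    have h2 : -(D xa + D xb) ≤ xa - xb := neg_le_of_abs_le h
    have e1 := hae xa
    have e2 := hbe xb
    rw [hAe, hBe]
    linarith
  have hσ0 : ∀ x ∈ S, 0 ≤ σ x := by
    intro x hx
    rw [hσa]
    exact sub_nonneg.2 (hxamin x hx)
  have hθ0 : ∀ x ∈ S, 0 ≤ θ x := by
    intro x hx
    rw [hθb]
    exact sub_nonneg.2 (hxbmin x hx)
  have hr0 : ∀ x ∈ S, 0 ≤ r x := fun x hx => by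
    rw [hrσθ]; exact add_nonneg (hσ0 x hx) (hθ0 x hx)
  have hr2D : ∀ x ∈ S, r x ≤ 2 * D x := by
    intro x hx
    have e1 := hae x
    have e2 := hbe x
    have e3 := hrσθ x
    have e4 := hθb x
    have e5 := hσa x
    linarith
  set J := S.image g with hJ
  have hpick : ∀ j ∈ J, ∃ p ∈ S.filter (fun x => g x = j),
      ∀ y ∈ S.filter (fun x => g x = j), r p ≤ r y := by
    intro j hj
    obtain ⟨x, hx, hgx⟩ := Finset.mem_image.1 hj
    exact Finset.exists_min_image _ r ⟨x, Finset.mem_filter.2 ⟨hx, hgx⟩⟩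
  choose! pick hpick1 hpick2 using hpick
  have hpickS : ∀ j ∈ J, pick j ∈ S := fun j hj => (Finset.mem_filter.1 (hpick1 j hj)).1
  have hpickg : ∀ j ∈ J, g (pick j) = j := fun j hj => (Finset.mem_filter.1 (hpick1 j hj)).2
  refine ⟨J.image pick, ?_, ?_, ?_⟩
  · intro p hp
    obtain ⟨j, hj, rfl⟩ := Finset.mem_image.1 hp
    exact hpickS j hj
  · -- cardinality
    have hJsub : J ⊆ Finset.range (⌊1/δ⌋₊ + 1) := by
      intro j hj
      obtain ⟨x, hx, rfl⟩ := Finset.mem_image.1 hj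
      rw [Finset.mem_range, Nat.lt_succ_iff, hgeq]
      rcases eq_or_lt_of_le (hr0 x hx) with h0 | hrx
      · rw [← h0]
        simp
      · apply Nat.floor_le_floor
        have hθr : θ x ≤ r x := by rw [hrσθ]; linarith [hσ0 x hx]
        rw [div_le_div_iff₀ (mul_pos hδ hrx) hδ]
        nlinarith [mul_le_mul_of_nonneg_right hθr hδ.le]
    have h1 : (J.image pick).card ≤ J.card := Finset.card_image_le
    have h2 : J.card ≤ ⌊1/δ⌋₊ + 1 := by
      simpa using Finset.card_le_card hJsub
    have h3 : ((⌊1/δ⌋₊ : ℝ)) ≤ 1/δ := Nat.floor_le (one_div_nonneg.2 hδ.le)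
    have h4 : ((J.image pick).card : ℝ) ≤ (⌊1/δ⌋₊ : ℝ) + 1 := by
      exact_mod_cast le_trans h1 h2
    have h5 : 1/δ = 2/ε := by rw [hδdef]; field_simp
    have h6 : 2/ε ≤ 4/ε := by gcongr; norm_num
    linarith
  · intro x hx
    set j := g x with hj
    have hjJ : j ∈ J := Finset.mem_image_of_mem g hx
    set p := pick j with hp
    have hpS : p ∈ S := hpickS j hjJ
    have hgp : g p = j := hpickg j hjJ
    have hrpx : r p ≤ r x := hpick2 j hjJ x (Finset.mem_filter.2 ⟨hx, rfl⟩)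
    refine ⟨p, Finset.mem_image_of_mem pick hjJ, ?_⟩
    have hθp := hθ0 p hpS
    have hσp := hσ0 p hpS
    have hθx := hθ0 x hx
    have hσx := hσ0 x hx
    have hrxnn := hr0 x hx
    -- key: θ p ≤ θ x + δ * r x and σ p ≤ σ x + δ * r x
    have key : θ p ≤ θ x + δ * r x ∧ σ p ≤ σ x + δ * r x := by
      rcases eq_or_lt_of_le (hr0 p hpS) with h0 | hrp
      · have hre : σ p + θ p = 0 := by rw [← hrσθ, ← h0]
        have hnn : 0 ≤ δ * r x := mul_nonneg hδ.le hrxnn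
        constructor <;> linarith
      · have hrx : 0 < r x := lt_of_lt_of_le hrp hrpx
        have hj0 : (0:ℝ) ≤ (j:ℝ) := Nat.cast_nonneg j
        have ejx : j = ⌊θ x / (δ * r x)⌋₊ := by rw [hj, hgeq]
        have ejp : j = ⌊θ p / (δ * r p)⌋₊ := by rw [← hgp, hgeq]
        have h1 : (j:ℝ) ≤ θ x / (δ * r x) := by
          rw [ejx]; exact Nat.floor_le (div_nonneg hθx (mul_pos hδ hrx).le)
        have h2 : θ x / (δ * r x) < (j:ℝ) + 1 := by
          have h := Nat.lt_floor_add_one (θ x / (δ * r x))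
          rw [ejx]; push_cast; exact h
        have h3 : (j:ℝ) ≤ θ p / (δ * r p) := by
          rw [ejp]; exact Nat.floor_le (div_nonneg hθp (mul_pos hδ hrp).le)
        have h4 : θ p / (δ * r p) < (j:ℝ) + 1 := by
          have h := Nat.lt_floor_add_one (θ p / (δ * r p))
          rw [ejp]; push_cast; exact h
        rw [le_div_iff₀ (mul_pos hδ hrx)] at h1
        rw [le_div_iff₀ (mul_pos hδ hrp)] at h3
        rw [div_lt_iff₀ (mul_pos hδ hrx)] at h2
        rw [div_lt_iff₀ (mul_pos hδ hrp)] at h4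
        have hθprp : θ p ≤ r p := by rw [hrσθ]; linarith
        have hjδ : (j:ℝ) * δ ≤ 1 := by nlinarith
        constructor
        · nlinarith [mul_nonneg (mul_nonneg hj0 hδ.le) (sub_nonneg.2 hrpx),
            mul_nonneg hδ.le (sub_nonneg.2 hrpx)]
        · have hσform : σ p = r p - θ p := by rw [hrσθ]; ring
          have hσxform : σ x = r x - θ x := by rw [hrσθ]; ring
          nlinarith [mul_nonneg (sub_nonneg.2 hrpx) (sub_nonneg.2 hjδ)]
    have hδr : δ * r x ≤ ε * D x := by
      have hm : δ * r x ≤ δ * (2 * D x) := mul_le_mul_of_nonneg_left (hr2D x hx) hδ.le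
      have he : δ * (2 * D x) = ε * D x := by rw [hδdef]; ring
      linarith
    have hbp : D p - p ≤ D x - x + ε * D x := by
      have k := key.1
      have t1 := hθb p
      have t2 := hθb x
      have t3 := hbe p
      have t4 := hbe x
      linarith
    have hap : D p + p ≤ D x + x + ε * D x := by
      have k := key.2
      have t1 := hσa p
      have t2 := hσa x
      have t3 := hae p
      have t4 := hae x
      linarith
    rcases le_total p x with hle | hle
    · rw [abs_of_nonneg (by linarith : (0:ℝ) ≤ x - p)]
      linarith
    · rw [abs_of_nonpos (by linarith : x - p ≤ 0)]
      linarith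
end

section
/- Let ε > 0 be a real number, let k be a natural number, and let q₀ ≤ q₁ ≤ ... ≤ q_k and D₀, D₁, ..., D_k be real numbers such that D₀ > 0, D_j ≥ D₀ for all j, D_j + (q_{j+1} − q_j) > (1+ε)·D_{j+1} for all 0 ≤ j < k, and D₀ + D_k ≥ q_k − q₀. Then k < 2/ε. -/
/-- The potential-function counting argument in the proof of Lemma 2 of the paper:
if `q 0 ≤ q 1 ≤ ... ≤ q k` are positions of greedily chosen portals, `D j` their
distances from the query vertex with `D 0 > 0` and `D j ≥ D 0` for all `j`, each greedy
step satisfies `D j + (q (j+1) - q j) > (1+ε) * D (j+1)`, and `D 0 + D k ≥ q k - q 0`,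
then `k < 2/ε`. -/
theorem portal_count (ε : ℝ) (hε : 0 < ε) (k : ℕ) (q D : ℕ → ℝ)
    (hq : ∀ j < k, q j ≤ q (j + 1))
    (hD0 : 0 < D 0) (hD : ∀ j ≤ k, D 0 ≤ D j)
    (hstep : ∀ j < k, D j + (q (j + 1) - q j) > (1 + ε) * D (j + 1))
    (hend : q k - q 0 ≤ D 0 + D k) :
    (k : ℝ) < 2 / ε := by
  rcases Nat.eq_zero_or_pos k with rfl | hk
  · simpa using div_pos (by norm_num : (0:ℝ) < 2) hε
  have key : ∀ j ≤ k, 1 ≤ j → D 0 + (q j - q 0) > D j + j * ε * D 0 := by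
    intro j hj hj1
    induction j with
    | zero => omega
    | succ n ih =>
      have hn : n < k := hj
      have hs := hstep n hn
      have hDn1 : D 0 ≤ D (n+1) := hD (n+1) hj
      rcases Nat.eq_zero_or_pos n with rfl | hn1
      · have : D 0 + (q 1 - q 0) > (1 + ε) * D 1 := by linarith [hstep 0 hn]
        push_cast
        nlinarith [hD 1 hj]
      · have hprev := ih (le_of_lt hn) hn1
        push_cast at hprev ⊢
        nlinarith
  have h := key k le_rfl hk
  have hk1 : (1:ℝ) ≤ k := by exact_mod_cast hk
  rw [lt_div_iff₀ hε]
  nlinarith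
end

section
/- For all natural numbers a and b with b < a, there exist a natural number k with k ≤ 2·⌊log₂ a⌋ + 2 and a strictly decreasing sequence of natural numbers a = a₀ > a₁ > ... > a_k = b such that for every t with 0 ≤ t < k there is a natural number j with 2^j dividing a_t and a_{t+1} = a_t − 2^j. -/
/-!
Descend from `a` by subtracting its lowest set bit `2^v` as long as the result is not below `b`:
each such step raises the 2-adic valuation, so there are at most `⌊log₂ a⌋ + 1` of them. Once
`a - 2^v < b`, the gap `a - b` is less than `2^v`, a divisor of `a`, and subtracting the binary
digits of the gap from the highest one down is a shortcut path: every power subtracted is smaller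
than the previous one, which divides the current depth. This takes at most `v ≤ ⌊log₂ a⌋` more steps.
-/

def ShortcutPath (k a b : ℕ) : Prop :=
  ∃ f : ℕ → ℕ, f 0 = a ∧ f k = b ∧ (∀ t < k, f (t + 1) < f t) ∧
    ∀ t < k, ∃ j : ℕ, 2 ^ j ∣ f t ∧ f (t + 1) = f t - 2 ^ j

def ReachableWithin (n a b : ℕ) : Prop :=
  ∃ k ≤ n, ShortcutPath k a b

theorem ShortcutPath.refl (a : ℕ) : ShortcutPath 0 a a :=
  ⟨fun _ => a, rfl, rfl, by simp, by simp⟩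

theorem ShortcutPath.cons {k a c j : ℕ} (ha : 0 < a) (hj : 2 ^ j ∣ a)
    (h : ShortcutPath k (a - 2 ^ j) c) : ShortcutPath (k + 1) a c := by
  obtain ⟨f, hf0, hfk, hdec, hstep⟩ := h
  refine ⟨fun t => if t = 0 then a else f (t - 1), by simp, by simp [hfk], ?_, ?_⟩
  · rintro (_ | t) ht
    · simpa [hf0] using Nat.sub_lt ha (Nat.two_pow_pos j)
    · simpa using hdec t (by omega)
  · rintro (_ | t) ht
    · exact ⟨j, by simpa using hj, by simp [hf0]⟩
    · simpa using hstep t (by omega)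

namespace ReachableWithin

theorem refl (n a : ℕ) : ReachableWithin n a a :=
  ⟨0, n.zero_le, ShortcutPath.refl a⟩

theorem mono {m n a b : ℕ} (hmn : m ≤ n) (h : ReachableWithin m a b) : ReachableWithin n a b :=
  let ⟨k, hk, hp⟩ := h
  ⟨k, hk.trans hmn, hp⟩

theorem cons {n a c j : ℕ} (ha : 0 < a) (hj : 2 ^ j ∣ a)
    (h : ReachableWithin n (a - 2 ^ j) c) : ReachableWithin (n + 1) a c :=
  let ⟨k, hk, hp⟩ := h
  ⟨k + 1, Nat.succ_le_succ hk, hp.cons ha hj⟩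

end ReachableWithin

theorem two_pow_succ_dvd_sub_two_pow {a v : ℕ} (hv : 2 ^ v ∣ a) (hv' : ¬2 ^ (v + 1) ∣ a) :
    2 ^ (v + 1) ∣ a - 2 ^ v := by
  obtain ⟨q, rfl⟩ := hv
  have hq : ¬2 ∣ q := by
    rwa [pow_succ, mul_dvd_mul_iff_left (Nat.two_pow_pos v).ne'] at hv'
  obtain ⟨r, rfl⟩ : ∃ r, q = 2 * r + 1 := ⟨q / 2, by omega⟩
  exact ⟨r, by rw [mul_add_one, Nat.add_sub_cancel, pow_succ, mul_assoc]⟩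

theorem reachableWithin_of_sub_lt_two_pow {a b v : ℕ} (hv : 2 ^ v ∣ a) (hba : b ≤ a)
    (hgap : a - b < 2 ^ v) : ReachableWithin v a b := by
  induction v generalizing a with
  | zero => exact (show a = b by omega) ▸ ReachableWithin.refl 0 a
  | succ v ih =>
    have hv' : 2 ^ v ∣ a := (pow_dvd_pow 2 v.le_succ).trans hv
    by_cases hsmall : a - b < 2 ^ v
    · exact (ih hv' hba hsmall).mono v.le_succ
    · have hpow : 2 ^ v ≤ a - b := not_lt.mp hsmall
      have hgap' : a - b < 2 ^ v + 2 ^ v := by rwa [pow_succ, mul_two] at hgap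
      refine ReachableWithin.cons (by omega) hv' (ih (Nat.dvd_sub hv' dvd_rfl) (by omega) ?_)
      omega

theorem reachableWithin_of_lt_two_pow {a b v d : ℕ} (hv : 2 ^ v ∣ a) (hba : b ≤ a)
    (ha : a < 2 ^ (v + d)) : ReachableWithin (v + 2 * d) a b := by
  induction d generalizing a v with
  | zero =>
    obtain rfl : a = 0 := Nat.eq_zero_of_dvd_of_lt hv ha
    obtain rfl : b = 0 := Nat.le_zero.mp hba
    exact ReachableWithin.refl _ 0
  | succ d ih =>
    have ha' : a < 2 ^ (v + 1 + d) := by rwa [show v + 1 + d = v + (d + 1) by omega]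
    by_cases hclose : a - 2 ^ v < b
    · exact (reachableWithin_of_sub_lt_two_pow hv hba (by omega)).mono (by omega)
    by_cases hv' : 2 ^ (v + 1) ∣ a
    · exact (ih hv' hba ha').mono (by omega)
    · have ha0 : 0 < a := Nat.pos_of_ne_zero (by rintro rfl; exact hv' (dvd_zero _))
      have hstep := ih (two_pow_succ_dvd_sub_two_pow hv hv') (by omega)
        (lt_of_le_of_lt (Nat.sub_le a _) ha')
      exact (hstep.cons ha0 hv).mono (by omega)

/-- The shortcut system of Section 3.1 of the paper, in terms of depths in the
decomposition tree: from any depth `a` one can reach any smaller depth `b` by at most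
`2 * ⌊log₂ a⌋ + 2` shortcut steps, where a shortcut from depth `d` decreases the depth
by a power of two `2^j` dividing `d`. -/
theorem shortcut_system (a b : ℕ) (hba : b < a) :
    ∃ k : ℕ, k ≤ 2 * Nat.log 2 a + 2 ∧
      ∃ f : ℕ → ℕ, f 0 = a ∧ f k = b ∧ (∀ t < k, f (t + 1) < f t) ∧
        ∀ t < k, ∃ j : ℕ, 2 ^ j ∣ f t ∧ f (t + 1) = f t - 2 ^ j := by
  have ha : a < 2 ^ (0 + (Nat.log 2 a + 1)) := by
    simpa using Nat.lt_pow_succ_log_self Nat.one_lt_two a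
  exact (reachableWithin_of_lt_two_pow (by simp) hba.le ha).mono (by omega)
end

section
/- Let A and B be finite sets of real numbers, let f : A → ℝ and g : B → ℝ be functions such that f(a) ≤ f(a') + |a − a'| for all a, a' ∈ A and g(b) ≤ g(b') + |b − b'| for all b, b' ∈ B. Then for every a ∈ A and b ∈ B with a ≤ b there exist a' ∈ A and b' ∈ B with a ≤ a' ≤ b' ≤ b, such that no element of A ∪ B lies strictly between a' and b', and f(a') + (b' − a') + g(b') ≤ f(a) + (b − a) + g(b). -/
/-- The combination step of Section 5 of the paper, abstracted to the real line: `A` and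
`B` are the positions along a shortest path of the pruned portal sets of the two query
vertices, `f` and `g` the corresponding approximate distances (satisfying the pruning
guarantee `f a ≤ f a' + |a - a'|`). For any `a ∈ A` and `b ∈ B` with `a ≤ b` there is an
adjacent pair `a' ∈ A`, `b' ∈ B` (with no element of `A ∪ B` strictly between them) whose
combined value is no larger. -/
theorem adjacent_pair_combination (A B : Finset ℝ) (f g : ℝ → ℝ)
    (hf : ∀ a ∈ A, ∀ a' ∈ A, f a ≤ f a' + |a - a'|)
    (hg : ∀ b ∈ B, ∀ b' ∈ B, g b ≤ g b' + |b - b'|)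
    (a : ℝ) (ha : a ∈ A) (b : ℝ) (hb : b ∈ B) (hab : a ≤ b) :
    ∃ a' ∈ A, ∃ b' ∈ B, a ≤ a' ∧ a' ≤ b' ∧ b' ≤ b ∧
      (∀ x ∈ A ∪ B, ¬(a' < x ∧ x < b')) ∧
      f a' + (b' - a') + g b' ≤ f a + (b - a) + g b := by
  classical
  set SA := A.filter (fun x => a ≤ x ∧ x ≤ b) with hSA
  have haSA : a ∈ SA := by simp [hSA, ha, hab]
  have hSAne : SA.Nonempty := ⟨a, haSA⟩
  set a' := SA.max' hSAne with ha'
  have ha'SA : a' ∈ SA := SA.max'_mem hSAne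
  have ha'A : a' ∈ A := (Finset.mem_filter.mp ha'SA).1
  have haa' : a ≤ a' := SA.le_max' a haSA
  have ha'b : a' ≤ b := (Finset.mem_filter.mp ha'SA).2.2
  set SB := B.filter (fun y => a' ≤ y ∧ y ≤ b) with hSB
  have hbSB : b ∈ SB := by simp [hSB, hb, ha'b]
  have hSBne : SB.Nonempty := ⟨b, hbSB⟩
  set b' := SB.min' hSBne with hb'
  have hb'SB : b' ∈ SB := SB.min'_mem hSBne
  have hb'B : b' ∈ B := (Finset.mem_filter.mp hb'SB).1
  have ha'b' : a' ≤ b' := (Finset.mem_filter.mp hb'SB).2.1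
  have hb'b : b' ≤ b := SB.min'_le b hbSB
  refine ⟨a', ha'A, b', hb'B, haa', ha'b', hb'b, ?_, ?_⟩
  · intro x hx ⟨hx1, hx2⟩
    rcases Finset.mem_union.mp hx with hxA | hxB
    · have : x ∈ SA := by
        refine Finset.mem_filter.mpr ⟨hxA, le_trans haa' hx1.le, le_trans hx2.le hb'b⟩
      exact absurd (SA.le_max' x this) (not_le.mpr hx1)
    · have : x ∈ SB := by
        refine Finset.mem_filter.mpr ⟨hxB, hx1.le, le_trans hx2.le hb'b⟩
      exact absurd (SB.min'_le x this) (not_le.mpr hx2)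
  · have h1 : f a' ≤ f a + (a' - a) := by
      have := hf a' ha'A a ha
      rwa [abs_of_nonneg (by linarith)] at this
    have h2 : g b' ≤ g b + (b - b') := by
      have := hg b' hb'B b hb
      rwa [abs_of_nonpos (by linarith), neg_sub] at this
    linarith
end
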